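/- Suppose w_i = 1 for all i ∈ V. Then every x* ∈ S that attains the minimum of J over S is the indicator vector χ_D of some dominating set D of G of minimum cardinality. -/

import Mathlib

/-- The observability feasible set `S`. -/
def pmuFeasible {V : Type*} [Fintype V] (G : SimpleGraph V) [DecidableRel G.Adj] :
    Set (V → ℝ) :=
  {x | (∀ i, (1 - x i) * ∏ j ∈ G.neighborFinset i, (1 - x j) = 0) ∧
    ∀ i, 0 ≤ x i ∧ x i ≤ 1}

/-!
For a dominating set `D`, the indicator `χ_D` is feasible and `J(χ_D) = |D|`. Conversely, for a
feasible `x` the set `D = {i | x i = 1}` is dominating (each constraint `f_i(x) = 0` forces a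
factor `1 - x_j` to vanish), and `J(x) ≥ |D|` with equality only if `x` vanishes off `D`.
Minimality of `x` against `χ_D` gives `J(x) ≤ |D|`, so `x = χ_D`; minimality against every other
`χ_{D'}` then gives `|D| ≤ |D'|`.
-/

def SimpleGraph.Dominates {V : Type*} (G : SimpleGraph V) (D : Finset V) : Prop :=
  ∀ v, v ∈ D ∨ ∃ d ∈ D, G.Adj v d

section

variable {V : Type*} [Fintype V]

noncomputable def unitSupport (x : V → ℝ) : Finset V := {i | x i = 1}

@[simp]
theorem mem_unitSupport {x : V → ℝ} {i : V} : i ∈ unitSupport x ↔ x i = 1 := by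
  simp [unitSupport]

theorem dominates_unitSupport_of_mem_pmuFeasible (G : SimpleGraph V) [DecidableRel G.Adj]
    {x : V → ℝ} (hx : x ∈ pmuFeasible G) : G.Dominates (unitSupport x) := by
  intro v
  rcases mul_eq_zero.1 (hx.1 v) with h | h
  · exact Or.inl (mem_unitSupport.2 (sub_eq_zero.1 h).symm)
  · obtain ⟨j, hj, hj0⟩ := Finset.prod_eq_zero_iff.1 h
    exact Or.inr ⟨j, mem_unitSupport.2 (sub_eq_zero.1 hj0).symm,
      (G.mem_neighborFinset v j).1 hj⟩

variable [DecidableEq V]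

theorem indicator_mem_pmuFeasible (G : SimpleGraph V) [DecidableRel G.Adj] {D : Finset V}
    (hD : G.Dominates D) : (fun i => if i ∈ D then (1 : ℝ) else 0) ∈ pmuFeasible G := by
  refine ⟨fun i => ?_, fun i => by dsimp only; split_ifs <;> norm_num⟩
  rcases hD i with hi | ⟨d, hd, hadj⟩
  · simp [hi]
  · exact mul_eq_zero_of_right _ <|
      Finset.prod_eq_zero ((G.mem_neighborFinset i d).2 hadj) (by simp [hd])

theorem sum_sq_indicator (D : Finset V) :
    ∑ i, (if i ∈ D then (1 : ℝ) else 0) ^ 2 = D.card := by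
  simp [ite_pow]

theorem sum_sq_eq_card_unitSupport_add (x : V → ℝ) :
    ∑ i, x i ^ 2 = (unitSupport x).card + ∑ i ∈ (unitSupport x)ᶜ, x i ^ 2 := by
  rw [← Finset.sum_add_sum_compl (unitSupport x), Finset.sum_congr rfl fun i hi => by
    rw [mem_unitSupport.1 hi, one_pow]]
  simp

theorem card_unitSupport_le_sum_sq (x : V → ℝ) : ((unitSupport x).card : ℝ) ≤ ∑ i, x i ^ 2 := by
  rw [sum_sq_eq_card_unitSupport_add]
  exact le_add_of_nonneg_right (Finset.sum_nonneg fun i _ => sq_nonneg (x i))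

theorem eq_indicator_unitSupport_of_sum_sq_le {x : V → ℝ}
    (hx : ∑ i, x i ^ 2 ≤ (unitSupport x).card) :
    x = fun i => if i ∈ unitSupport x then 1 else 0 := by
  rw [sum_sq_eq_card_unitSupport_add] at hx
  have hcompl : ∀ i ∈ (unitSupport x)ᶜ, x i ^ 2 = 0 :=
    (Finset.sum_eq_zero_iff_of_nonneg fun i _ => sq_nonneg (x i)).1 <|
      le_antisymm (by linarith) (Finset.sum_nonneg fun i _ => sq_nonneg (x i))
  funext i
  split_ifs with hi
  · exact mem_unitSupport.1 hi
  · exact pow_eq_zero_iff two_ne_zero |>.1 (hcompl i (Finset.mem_compl.2 hi))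

end

/-- For unit weights, every global minimizer of `J` over `S` is the indicator
vector of a dominating set of `G` of minimum cardinality. -/
theorem stmt_11 {V : Type*} [Fintype V] [DecidableEq V] (G : SimpleGraph V)
    [DecidableRel G.Adj] (w : V → ℝ) (hw : ∀ i, w i = 1)
    (x : V → ℝ) (hxS : x ∈ pmuFeasible G)
    (hmin : ∀ y ∈ pmuFeasible G,
      (∑ i, w i * (x i) ^ 2) ≤ ∑ i, w i * (y i) ^ 2) :
    ∃ D : Finset V, (∀ v, v ∈ D ∨ ∃ d ∈ D, G.Adj v d) ∧
      D.card = sInf {n : ℕ | ∃ D' : Finset V,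
        (∀ v, v ∈ D' ∨ ∃ d ∈ D', G.Adj v d) ∧ D'.card = n} ∧
      x = fun i => if i ∈ D then (1 : ℝ) else 0 := by
  simp only [hw, one_mul] at hmin
  have hJ_le : ∀ D' : Finset V, G.Dominates D' → ∑ i, x i ^ 2 ≤ D'.card := fun D' hD' =>
    sum_sq_indicator D' ▸ hmin _ (indicator_mem_pmuFeasible G hD')
  have hD : G.Dominates (unitSupport x) := dominates_unitSupport_of_mem_pmuFeasible G hxS
  refine ⟨unitSupport x, hD, ?_, eq_indicator_unitSupport_of_sum_sq_le (hJ_le _ hD)⟩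
  symm
  refine IsLeast.csInf_eq ⟨⟨_, hD, rfl⟩, ?_⟩
  rintro _ ⟨D', hD', rfl⟩
  exact_mod_cast (card_unitSupport_le_sum_sq x).trans (hJ_le D' hD')
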